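/- Every trace of Lib with k = l + 2 threads that is not linearizable w.r.t. S_N contains exactly one call event to the method M_Tick, and this call is matched by a return event (i.e., the trace has exactly one completed M_Tick method event and no open M_Tick calls). -/

import Mathlib

namespace Paper

/-- The shared-variable domain `D = {Begin, Run, End}`. -/
inductive DVal where
  | Begin
  | Run
  | End
  deriving DecidableEq

/-- Method names of the library `Lib`: `Sum.inl (Sum.inl γ)` is `M_γ` (γ ∈ Γ),
`Sum.inl (Sum.inr i)` is `M_i` (1 ≤ i ≤ l), and `Sum.inr ()` is `M_Tick`. -/
abbrev MName (Γ : Type) (l : ℕ) := (Γ ⊕ Fin l) ⊕ Unit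

/-- The method `M_Tick`. -/
def tickName {Γ : Type} {l : ℕ} : MName Γ l := Sum.inr ()

/-- The method `M_γ`. -/
def gammaName {Γ : Type} {l : ℕ} (γ : Γ) : MName Γ l := Sum.inl (Sum.inl γ)

/-- The method `M_i`. -/
def insName {Γ : Type} {l : ℕ} (i : Fin l) : MName Γ l := Sum.inl (Sum.inr i)

/-- The final state (program counter) of each method. -/
def finalPC {Γ : Type} {l : ℕ} : MName Γ l → ℕ
  | Sum.inl (Sum.inl _) => 1
  | Sum.inl (Sum.inr _) => 2
  | Sum.inr _ => 2

/-- Internal (read/write) transitions of the methods: `M_γ` reads `Run`;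
`M_i` reads `Begin` then reads `End`; `M_Tick` writes `Run` then writes
`End`.  `mTrans m pc d d' pc'` means that method `m` can step from program
counter `pc` with shared value `d` to program counter `pc'` with shared value
`d'`. -/
def mTrans {Γ : Type} {l : ℕ} (m : MName Γ l) (pc : ℕ) (d d' : DVal)
    (pc' : ℕ) : Prop :=
  match m with
  | Sum.inl (Sum.inl _) =>
      pc = 0 ∧ pc' = 1 ∧ d = DVal.Run ∧ d' = d
  | Sum.inl (Sum.inr _) =>
      (pc = 0 ∧ pc' = 1 ∧ d = DVal.Begin ∧ d' = d) ∨
      (pc = 1 ∧ pc' = 2 ∧ d = DVal.End ∧ d' = d)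
  | Sum.inr _ =>
      (pc = 0 ∧ pc' = 1 ∧ d' = DVal.Run) ∨
      (pc = 1 ∧ pc' = 2 ∧ d' = DVal.End)

/-- Observable labels: calls (with thread and method) and returns (with
thread). -/
inductive Label (Γ : Type) (l k : ℕ) where
  | call (t : Fin k) (m : MName Γ l)
  | ret (t : Fin k)

/-- A configuration of `Lib^k`: the shared value together with, for each
thread, `none` (idle) or the method it is running and its program counter. -/
abbrev LCfg (Γ : Type) (l k : ℕ) := DVal × (Fin k → Option (MName Γ l × ℕ))

/-- `Steps c tr c'` holds iff there is an execution from `c` to `c'` whose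
trace (sequence of call/return labels) is `tr`; read/write steps are
unlabelled. -/
inductive Steps {Γ : Type} {l k : ℕ} :
    LCfg Γ l k → List (Label Γ l k) → LCfg Γ l k → Prop where
  | nil (c : LCfg Γ l k) : Steps c [] c
  | call {d : DVal} {μ : Fin k → Option (MName Γ l × ℕ)} (t : Fin k)
      (m : MName Γ l) {tr : List (Label Γ l k)} {c' : LCfg Γ l k}
      (h : μ t = none)
      (hs : Steps (d, Function.update μ t (some (m, 0))) tr c') :
      Steps (d, μ) (Label.call t m :: tr) c'
  | ret {d : DVal} {μ : Fin k → Option (MName Γ l × ℕ)} (t : Fin k)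
      (m : MName Γ l) {tr : List (Label Γ l k)} {c' : LCfg Γ l k}
      (h : μ t = some (m, finalPC m))
      (hs : Steps (d, Function.update μ t none) tr c') :
      Steps (d, μ) (Label.ret t :: tr) c'
  | internal {d : DVal} {μ : Fin k → Option (MName Γ l × ℕ)} (d' : DVal)
      (t : Fin k) (m : MName Γ l) (pc pc' : ℕ) {tr : List (Label Γ l k)}
      {c' : LCfg Γ l k}
      (h : μ t = some (m, pc)) (ht : mTrans m pc d d' pc')
      (hs : Steps (d', Function.update μ t (some (m, pc'))) tr c') :
      Steps (d, μ) tr c'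

/-- `tr` is a trace of `Lib` with `k` threads: the trace of some execution
from the initial configuration (shared value `Begin`, all threads idle). -/
def IsTrace {Γ : Type} {l k : ℕ} (tr : List (Label Γ l k)) : Prop :=
  ∃ c' : LCfg Γ l k, Steps (DVal.Begin, fun _ => none) tr c'

/-- The thread performing a label. -/
def threadOf {Γ : Type} {l k : ℕ} : Label Γ l k → Fin k
  | Label.call t _ => t
  | Label.ret t => t

/-- Position `a` of `h` carries an open call: a call event with no matching
later return (no later event of the same thread). -/
def IsOpenCall {Γ : Type} {l k : ℕ} (h : List (Label Γ l k)) (a : ℕ) : Prop :=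
  ∃ (t : Fin k) (m : MName Γ l), h[a]? = some (Label.call t m) ∧
    ∀ (b : ℕ) (lb : Label Γ l k), a < b → h[b]? = some lb → threadOf lb ≠ t

/-- A complete trace: no open calls. -/
def CompleteTrace {Γ : Type} {l k : ℕ} (h : List (Label Γ l k)) : Prop :=
  ∀ a : ℕ, ¬ IsOpenCall h a

/-- A method event: positions of a matching call/return pair, together with
its thread and the name of the called method. -/
structure MEvent (Γ : Type) (l k : ℕ) where
  callPos : ℕ
  retPos : ℕ
  thread : Fin k
  name : MName Γ l

/-- `e` is a method event of the trace `h`: its call and return positions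
match (same thread, no event of that thread in between). -/
def IsMEvent {Γ : Type} {l k : ℕ} (h : List (Label Γ l k))
    (e : MEvent Γ l k) : Prop :=
  e.callPos < e.retPos ∧
  h[e.callPos]? = some (Label.call e.thread e.name) ∧
  h[e.retPos]? = some (Label.ret e.thread) ∧
  ∀ (c : ℕ) (lb : Label Γ l k), e.callPos < c → c < e.retPos →
    h[c]? = some lb → threadOf lb ≠ e.thread

/-- The happens-before relation: `e` returns before `e'` is called. -/
def HB {Γ : Type} {l k : ℕ} (e e' : MEvent Γ l k) : Prop :=
  e.retPos < e'.callPos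

/-- A complete trace `h` is linearizable w.r.t. a specification `S`: there is
a total order (a list without repetition) of all its method events extending
happens-before whose label sequence is in `S`. -/
def LinearizableComplete {Γ : Type} {l k : ℕ} (h : List (Label Γ l k))
    (S : Set (List (MName Γ l))) : Prop :=
  ∃ es : List (MEvent Γ l k), es.Nodup ∧
    (∀ e : MEvent Γ l k, IsMEvent h e ↔ e ∈ es) ∧
    es.Pairwise (fun e e' => ¬ HB e' e) ∧
    es.map MEvent.name ∈ S

/-- Remove from `h` the letters at the positions in `S`. -/
def deletePositions {α : Type} (h : List α) (S : Finset ℕ) : List α :=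
  (List.range h.length).filterMap (fun a => if a ∈ S then none else h[a]?)

/-- `h'` is a completion of `h`: it is obtained by deleting some open calls of
`h` and appending return events at the end, and it is complete. -/
def CompletionOf {Γ : Type} {l k : ℕ} (h h' : List (Label Γ l k)) : Prop :=
  ∃ (S : Finset ℕ) (tail : List (Label Γ l k)),
    (∀ a ∈ S, IsOpenCall h a) ∧
    (∀ lb ∈ tail, ∃ t : Fin k, lb = Label.ret t) ∧
    h' = deletePositions h S ++ tail ∧
    CompleteTrace h'

/-- A trace is linearizable w.r.t. `S` if some completion of it is. -/
def Linearizable {Γ : Type} {l k : ℕ} (h : List (Label Γ l k))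
    (S : Set (List (MName Γ l))) : Prop :=
  ∃ h' : List (Label Γ l k), CompletionOf h h' ∧ LinearizableComplete h' S

/-- The specification `S_N`: words containing zero or at least two `M_Tick`,
or zero or at least two `M_i` for some `i`, or whose projection onto the
letters `M_i`, `M_γ` is (up to the renaming `γ ↦ M_γ`, `a_i ↦ M_i`) in the
language of the NFA `Nfa`. -/
def SpecN {Γ : Type} [DecidableEq Γ] {l : ℕ} {σ : Type}
    (Nfa : NFA (Γ ⊕ Fin l) σ) : Set (List (MName Γ l)) :=
  {ws | ws.count tickName ≠ 1 ∨
        (∃ i : Fin l, ws.count (insName i) ≠ 1) ∨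
        (∃ x ∈ Nfa.accepts, ws.filterMap Sum.getLeft? = x)}

/-- `u` (over `Γ ∪ A`) is an insertion of the letters `A = {a_1, …, a_l}`
(the elements of `Fin l`) into `w ∈ Γ*`: each letter of `A` is inserted
exactly once, in any order, anywhere in `w`. -/
def IsInsertion {Γ : Type} {l : ℕ} (w : List Γ) (u : List (Γ ⊕ Fin l)) : Prop :=
  ∃ (ws : Fin (l + 1) → List Γ) (p : Equiv.Perm (Fin l)),
    w = (List.ofFn ws).flatten ∧
    u = (ws 0).map Sum.inl ++
        (List.ofFn fun i : Fin l => Sum.inr (p i) :: (ws i.succ).map Sum.inl).flatten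

end Paper

/-!
Each thread of a trace alternates calls and returns, since it only calls when idle and only
returns from a running method. Appending a return for every thread therefore completes the
trace, and listing the method events of the completion in the order of their calls respects
happens-before; the resulting word has one `M_Tick` per `M_Tick` call of the trace. If the trace
does not have exactly one such call, that word lies in `S_N`. If its only `M_Tick` call is open,
deleting it first yields a completion, and a linearization, without any `M_Tick`.
-/

namespace List

variable {α : Type*}

theorem filterMap_range_getElem? (h : List α) :
    (range h.length).filterMap (h[·]?) = h := by
  induction h with
  | nil => rfl
  | cons x h ih => simp [range_succ_eq_map, filterMap_map, ih]

theorem filter_drop_eq_filter_drop {p : α → Bool} {h : List α} {a b : ℕ} (hab : a ≤ b)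
    (hmid : ∀ c x, a ≤ c → c < b → h[c]? = some x → p x = false) :
    (h.drop a).filter p = (h.drop b).filter p := by
  induction b, hab using Nat.le_induction with
  | base => rfl
  | succ b hab ih =>
    rw [ih fun c x hac hcb => hmid c x hac (by omega)]
    rcases lt_or_ge b h.length with hb | hb
    · rw [drop_eq_getElem_cons hb, filter_cons_of_neg]
      simpa using hmid b h[b] hab (by omega) (getElem?_eq_getElem hb)
    · simp [drop_eq_nil_of_le hb, drop_eq_nil_of_le (Nat.le_succ_of_le hb)]

theorem pair_infix_filter {p : α → Bool} {h : List α} {a b : ℕ} {x y : α} (hab : a < b)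
    (hx : h[a]? = some x) (hy : h[b]? = some y) (hpx : p x) (hpy : p y)
    (hmid : ∀ c z, a < c → c < b → h[c]? = some z → p z = false) :
    [x, y] <:+: h.filter p := by
  obtain ⟨ha, rfl⟩ := getElem?_eq_some_iff.mp hx
  obtain ⟨hb, rfl⟩ := getElem?_eq_some_iff.mp hy
  have hdrop : (h.drop a).filter p = h[a] :: h[b] :: (h.drop (b + 1)).filter p := by
    rw [drop_eq_getElem_cons ha, filter_cons_of_pos hpx,
      filter_drop_eq_filter_drop hab hmid, drop_eq_getElem_cons hb, filter_cons_of_pos hpy]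
  exact (prefix_iff_eq_take.mpr (by simp [hdrop])).isInfix.trans
    ((drop_suffix a h).filter p).isInfix

end List

namespace Paper

variable {Γ : Type} {l k : ℕ}

namespace Label

def isCall : Label Γ l k → Bool
  | call _ _ => true
  | ret _ => false

def callee : Label Γ l k → Option (MName Γ l)
  | call _ m => some m
  | ret _ => none

end Label

def NoNestedCalls (h : List (Label Γ l k)) : Prop :=
  ∀ t, (h.filter (threadOf · = t)).IsChain fun x y => x.isCall → y.isCall = false

/-- Stands in for the last label of thread `t`: a call while `t` runs a method, a return while
it is idle. -/
def lastLabel (μ : Fin k → Option (MName Γ l × ℕ)) (t : Fin k) : Label Γ l k :=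
  match μ t with
  | none => .ret t
  | some (m, _) => .call t m

theorem Steps.isChain_lastLabel {c c' : LCfg Γ l k} {tr : List (Label Γ l k)}
    (hs : Steps c tr c') (t : Fin k) :
    (lastLabel c.2 t :: tr.filter (threadOf · = t)).IsChain
      fun x y => x.isCall → y.isCall = false := by
  induction hs with
  | nil => exact .singleton _
  | @call _ μ t' m _ _ hμ _ ih =>
    by_cases ht : t' = t
    · subst ht
      simpa [lastLabel, hμ, threadOf, Label.isCall] using ih
    · simpa [lastLabel, Function.update_of_ne (Ne.symm ht), threadOf, ht] using ih
  | @ret _ μ t' m _ _ hμ _ ih =>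
    by_cases ht : t' = t
    · subst ht
      simpa [lastLabel, hμ, threadOf, Label.isCall] using ih
    · simpa [lastLabel, Function.update_of_ne (Ne.symm ht), threadOf, ht] using ih
  | @internal _ μ _ t' m _ pc' _ _ hμ _ _ ih =>
    have hlast : lastLabel (Function.update μ t' (some (m, pc'))) = lastLabel μ := by
      funext t
      by_cases ht : t = t'
      · subst ht; simp [lastLabel, hμ]
      · simp [lastLabel, Function.update_of_ne ht]
    simpa [hlast] using ih

theorem IsTrace.noNestedCalls {tr : List (Label Γ l k)} (htr : IsTrace tr) :
    NoNestedCalls tr := fun t =>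
  let ⟨_, hs⟩ := htr
  (hs.isChain_lastLabel t).tail

theorem NoNestedCalls.eq_ret_of_call {h : List (Label Γ l k)} (hw : NoNestedCalls h)
    {a b : ℕ} {t : Fin k} {m : MName Γ l} {lb : Label Γ l k} (hab : a < b)
    (ha : h[a]? = some (.call t m)) (hb : h[b]? = some lb) (hth : threadOf lb = t)
    (hmid : ∀ c lc, a < c → c < b → h[c]? = some lc → threadOf lc ≠ t) :
    lb = .ret t := by
  have hpair := (hw t).infix <| List.pair_infix_filter hab ha hb (by simp [threadOf])
    (by simpa using hth) fun c lc hac hcb hc => by simpa using hmid c lc hac hcb hc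
  rw [List.isChain_pair] at hpair
  cases lb with
  | call => simp [Label.isCall] at hpair
  | ret t' => rw [← hth]; rfl

theorem NoNestedCalls.exists_isMEvent {h : List (Label Γ l k)} (hw : NoNestedCalls h)
    {a : ℕ} {t : Fin k} {m : MName Γ l} (ha : h[a]? = some (.call t m))
    (hopen : ¬ IsOpenCall h a) : ∃ e, IsMEvent h e ∧ e.callPos = a := by
  classical
  have hlater : ∃ b, a < b ∧ ∃ lb, h[b]? = some lb ∧ threadOf lb = t := by
    by_contra! hnone
    exact hopen ⟨t, m, ha, fun b lb hab hb => hnone b hab lb hb⟩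
  obtain ⟨hab, lb, hb, hth⟩ := Nat.find_spec hlater
  have hmid : ∀ c lc, a < c → c < Nat.find hlater → h[c]? = some lc → threadOf lc ≠ t :=
    fun c lc hac hcb hc hth => Nat.find_min hlater hcb ⟨hac, lc, hc, hth⟩
  have hret := hw.eq_ret_of_call hab ha hb hth hmid
  exact ⟨⟨a, Nat.find hlater, t, m⟩, ⟨hab, ha, hret ▸ hb, hmid⟩, rfl⟩

theorem IsMEvent.eq_of_callPos_eq {h : List (Label Γ l k)} {e e' : MEvent Γ l k}
    (he : IsMEvent h e) (he' : IsMEvent h e') (hc : e.callPos = e'.callPos) : e = e' := by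
  obtain ⟨a, r, t, m⟩ := e
  obtain ⟨a', r', t', m'⟩ := e'
  obtain ⟨hlt, hcall, hret, hmid⟩ := he
  obtain ⟨hlt', hcall', hret', hmid'⟩ := he'
  dsimp only at *
  subst hc
  obtain ⟨rfl, rfl⟩ : t = t' ∧ m = m' := by simpa using hcall.symm.trans hcall'
  obtain rfl : r = r' := by
    by_contra hne
    rcases Nat.lt_or_gt_of_ne hne with hr | hr
    · exact hmid' r _ hlt hr hret rfl
    · exact hmid r' _ hlt' hr hret' rfl
  rfl

open Classical in
noncomputable def eventAt (h : List (Label Γ l k)) (a : ℕ) : Option (MEvent Γ l k) :=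
  if he : ∃ e, IsMEvent h e ∧ e.callPos = a then some he.choose else none

theorem eventAt_eq_some_iff {h : List (Label Γ l k)} {a : ℕ} {e : MEvent Γ l k} :
    eventAt h a = some e ↔ IsMEvent h e ∧ e.callPos = a := by
  unfold eventAt
  split_ifs with he
  · obtain ⟨hchoose, hpos⟩ := he.choose_spec
    rw [Option.some.injEq]
    constructor
    · rintro rfl
      exact ⟨hchoose, hpos⟩
    · rintro ⟨hie, rfl⟩
      exact hchoose.eq_of_callPos_eq hie hpos
  · simpa using fun hie hpos => he ⟨e, hie, hpos⟩

noncomputable def linearization (h : List (Label Γ l k)) : List (MEvent Γ l k) :=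
  (List.range h.length).filterMap (eventAt h)

theorem mem_linearization {h : List (Label Γ l k)} {e : MEvent Γ l k} :
    e ∈ linearization h ↔ IsMEvent h e := by
  simp only [linearization, List.mem_filterMap, List.mem_range, eventAt_eq_some_iff]
  constructor
  · rintro ⟨a, -, he, -⟩
    exact he
  · intro he
    exact ⟨e.callPos, (List.getElem?_eq_some_iff.mp he.2.1).1, he, rfl⟩

theorem nodup_linearization (h : List (Label Γ l k)) : (linearization h).Nodup :=
  List.nodup_range.filterMap fun _ _ _ ha ha' =>
    (eventAt_eq_some_iff.mp ha).2.symm.trans (eventAt_eq_some_iff.mp ha').2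

theorem pairwise_linearization (h : List (Label Γ l k)) :
    (linearization h).Pairwise fun e e' => ¬ HB e' e := by
  refine List.pairwise_filterMap.mpr (List.pairwise_lt_range.imp ?_)
  intro a b hab e hae e' hbe' hHB
  obtain ⟨-, rfl⟩ := eventAt_eq_some_iff.mp hae
  obtain ⟨he', rfl⟩ := eventAt_eq_some_iff.mp hbe'
  have := he'.1
  unfold HB at hHB
  omega

theorem NoNestedCalls.map_name_linearization {h : List (Label Γ l k)} (hw : NoNestedCalls h)
    (hc : CompleteTrace h) : (linearization h).map MEvent.name = h.filterMap Label.callee := by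
  conv_rhs => rw [← List.filterMap_range_getElem? h]
  rw [linearization, List.map_filterMap, List.filterMap_filterMap]
  refine List.filterMap_congr fun a _ => ?_
  rcases hev : eventAt h a with _ | e
  · rcases ha : h[a]? with _ | (⟨t, m⟩ | t)
    · rfl
    · obtain ⟨e, he, rfl⟩ := hw.exists_isMEvent ha (hc a)
      simp [eventAt_eq_some_iff.mpr ⟨he, rfl⟩] at hev
    · rfl
  · obtain ⟨he, rfl⟩ := eventAt_eq_some_iff.mp hev
    simp [he.2.1, Label.callee]

theorem NoNestedCalls.linearizableComplete {h : List (Label Γ l k)} (hw : NoNestedCalls h)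
    (hc : CompleteTrace h) {S : Set (List (MName Γ l))} (hS : h.filterMap Label.callee ∈ S) :
    LinearizableComplete h S :=
  ⟨linearization h, nodup_linearization h, fun _ => mem_linearization.symm,
    pairwise_linearization h, hw.map_name_linearization hc ▸ hS⟩

/-- Idle threads return too: such a return matches no call and creates no method event. -/
def closeAll (k : ℕ) : List (Label Γ l k) :=
  (List.finRange k).map .ret

theorem filterMap_callee_closeAll :
    (closeAll k).filterMap Label.callee = ([] : List (MName Γ l)) := by
  simp [closeAll, List.filterMap_map, Function.comp_def, Label.callee]

theorem completeTrace_append_closeAll (h : List (Label Γ l k)) :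
    CompleteTrace (h ++ closeAll k) := by
  rintro a ⟨t, m, ha, hnone⟩
  have haL : a < h.length := by
    by_contra! hge
    rw [List.getElem?_append_right hge] at ha
    simpa [closeAll] using List.mem_of_getElem? ha
  refine hnone (h.length + t) (.ret t) (by omega) ?_ rfl
  rw [List.getElem?_append_right (by omega)]
  simp [closeAll]

theorem NoNestedCalls.append_closeAll {h : List (Label Γ l k)} (hw : NoNestedCalls h) :
    NoNestedCalls (h ++ closeAll k) := by
  have hret : ∀ x ∈ closeAll (Γ := Γ) (l := l) k, x.isCall = false := by
    simp [closeAll, Label.isCall]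
  intro t
  rw [List.filter_append]
  refine (hw t).append ?_ fun _ _ y hy _ =>
    hret y (List.mem_of_mem_filter (List.mem_of_mem_head? hy))
  refine List.isChain_iff_forall_rel_of_append_cons_cons.mpr fun _ y _ _ hl _ => hret y ?_
  have hy : y ∈ (closeAll k).filter (threadOf · = t) := by
    rw [hl]
    simp
  exact List.mem_of_mem_filter hy

theorem NoNestedCalls.eraseIdx {h : List (Label Γ l k)} (hw : NoNestedCalls h) {a : ℕ}
    (ha : IsOpenCall h a) : NoNestedCalls (h.eraseIdx a) := by
  obtain ⟨t₀, m₀, ha₀, hlater⟩ := ha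
  obtain ⟨haL, hget⟩ := List.getElem?_eq_some_iff.mp ha₀
  intro t
  refine (hw t).prefix ?_
  conv_rhs => rw [← List.take_append_drop a h, List.drop_eq_getElem_cons haL, hget]
  rw [List.eraseIdx_eq_take_drop_succ, List.filter_append, List.filter_append, List.filter_cons]
  by_cases ht : t₀ = t
  · subst ht
    have hdrop : (h.drop (a + 1)).filter (threadOf · = t₀) = [] := by
      refine List.filter_eq_nil_iff.mpr fun x hx hxt => ?_
      obtain ⟨j, hj, rfl⟩ := List.getElem_of_mem hx
      exact hlater (a + 1 + j) _ (by omega)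
        (by rw [← List.getElem?_drop]; exact List.getElem?_eq_getElem hj) (by simpa using hxt)
    simp [hdrop]
  · simp [threadOf, ht]

theorem deletePositions_empty {α : Type} (h : List α) : deletePositions h ∅ = h := by
  simpa [deletePositions] using List.filterMap_range_getElem? h

theorem deletePositions_singleton {α : Type} (h : List α) (a : ℕ) :
    deletePositions h {a} = h.eraseIdx a := by
  induction h generalizing a with
  | nil => rfl
  | cons x h ih =>
    cases a with
    | zero =>
      simpa [deletePositions, List.range_succ_eq_map, List.filterMap_map, Function.comp_def]
        using List.filterMap_range_getElem? h
    | succ a =>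
      simpa [deletePositions, List.range_succ_eq_map, List.filterMap_map, Function.comp_def]
        using ih a

theorem linearizable_of_deletePositions {h : List (Label Γ l k)} {D : Finset ℕ}
    (hD : ∀ a ∈ D, IsOpenCall h a) (hw : NoNestedCalls (deletePositions h D))
    {S : Set (List (MName Γ l))} (hS : (deletePositions h D).filterMap Label.callee ∈ S) :
    Linearizable h S :=
  ⟨_, ⟨D, closeAll k, hD, by simp [closeAll], rfl, completeTrace_append_closeAll _⟩,
    hw.append_closeAll.linearizableComplete (completeTrace_append_closeAll _)
      (by rwa [List.filterMap_append, filterMap_callee_closeAll, List.append_nil])⟩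

theorem NoNestedCalls.linearizable {h : List (Label Γ l k)} (hw : NoNestedCalls h)
    {S : Set (List (MName Γ l))} (hS : h.filterMap Label.callee ∈ S) : Linearizable h S :=
  linearizable_of_deletePositions (D := ∅) (by simp) (by rwa [deletePositions_empty])
    (by rwa [deletePositions_empty])

theorem NoNestedCalls.linearizable_of_isOpenCall {h : List (Label Γ l k)} (hw : NoNestedCalls h)
    {a : ℕ} (ha : IsOpenCall h a) {S : Set (List (MName Γ l))}
    (hS : (h.eraseIdx a).filterMap Label.callee ∈ S) : Linearizable h S :=
  linearizable_of_deletePositions (D := {a}) (by simpa)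
    (by rw [deletePositions_singleton]; exact hw.eraseIdx ha) (by rwa [deletePositions_singleton])

-- `List.count` on `MName` uses the derived `BEq` of `Sum`, which has no `LawfulBEq` instance.
theorem beq_tickName_eq_decide [DecidableEq Γ] (m : MName Γ l) :
    (m == tickName) = decide (m = tickName) := by
  rcases m with (_ | _) | ⟨⟩ <;> rfl

theorem count_tickName_eraseIdx [DecidableEq Γ] {h : List (Label Γ l k)} {a : ℕ} {t : Fin k}
    (ha : h[a]? = some (.call t tickName)) :
    ((h.eraseIdx a).filterMap Label.callee).count tickName + 1 =
      (h.filterMap Label.callee).count tickName := by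
  obtain ⟨haL, hget⟩ := List.getElem?_eq_some_iff.mp ha
  conv_rhs => rw [← List.take_append_drop a h, List.drop_eq_getElem_cons haL, hget]
  simp only [Label.callee, List.eraseIdx_eq_take_drop_succ, List.filterMap_append,
    List.count_append, Option.some.injEq, List.filterMap_cons_some, List.count_cons,
    beq_tickName_eq_decide, decide_true, ↓reduceIte]
  omega

theorem unique_completed_tick
    (Γ : Type) (instD : DecidableEq Γ) (l : ℕ)
    (σ : Type) (Nfa : NFA (Γ ⊕ Fin l) σ)
    (tr : List (Label Γ l (l + 2)))
    (htr : IsTrace tr) (hnl : ¬ Linearizable tr (SpecN Nfa)) :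
    tr.countP (fun lb => match lb with
      | Label.call _ m => decide (m = tickName)
      | Label.ret _ => false) = 1 ∧
    ∀ (a : ℕ) (t : Fin (l + 2)), tr[a]? = some (Label.call t tickName) →
      ∃ e : MEvent Γ l (l + 2), IsMEvent tr e ∧ e.callPos = a := by
  have hw := htr.noNestedCalls
  have hcount : (tr.filterMap Label.callee).count tickName = 1 := by
    by_contra hne
    exact hnl (hw.linearizable (Or.inl hne))
  refine ⟨?_, fun a t ha => ?_⟩
  · rw [← hcount, List.count_filterMap]
    exact List.countP_congr fun lb _ => by
      cases lb <;> simp [Label.callee, beq_tickName_eq_decide]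
  refine hw.exists_isMEvent ha fun hopen => hnl (hw.linearizable_of_isOpenCall hopen (Or.inl ?_))
  have := count_tickName_eraseIdx ha
  omega

end Paper
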